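/- If f: Z → X = R^D is a stochastic generator f(z) = μ(z) + σ(z) ⊙ ε with ε ~ N(0, I_D), and μ, σ are differentiable, then the expectation over ε of the random metric M_z = J_z^T J_z (where J_z is the Jacobian of f at z) equals (J^μ_z)^T (J^μ_z) + (J^σ_z)^T (J^σ_z), where J^μ_z and J^σ_z are the Jacobians of μ and σ. -/

import Mathlib

open MeasureTheory ProbabilityTheory Matrix

/-!
With `J(ε) = Jμ + diag(ε) Jσ`, entry `(i, j)` of `J(ε)ᵀ J(ε)` is
`∑ₖ (Jμ k i + εₖ Jσ k i) (Jμ k j + εₖ Jσ k j)`, each summand involving a single coordinate `εₖ`.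
Taking expectations, the cross terms vanish because `E[εₖ] = 0` and the quadratic term contributes
`Jσ k i Jσ k j` because `E[εₖ²] = 1`.
-/

namespace ProbabilityTheory.HasLaw

variable {Ω : Type*} [MeasurableSpace Ω] {P : Measure Ω} {X : Ω → ℝ} {m : ℝ} {v : NNReal}

lemma memLp_of_gaussianReal (hX : HasLaw X (gaussianReal m v) P) (p : NNReal) :
    MemLp X p P := by
  have hid := memLp_id_gaussianReal (μ := m) (v := v) p
  rw [← hX.map_eq] at hid
  exact hid.comp_of_map hX.aemeasurable

lemma integral_sq_of_gaussianReal (hX : HasLaw X (gaussianReal m v) P) :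
    ∫ ω, X ω ^ 2 ∂P = m ^ 2 + v := by
  have := hX.isProbabilityMeasure
  have hvar := variance_eq_sub (hX.memLp_of_gaussianReal 2)
  rw [hX.variance_eq, variance_id_gaussianReal, hX.integral_eq, integral_id_gaussianReal] at hvar
  simp only [Pi.pow_apply] at hvar
  linarith

end ProbabilityTheory.HasLaw

section SecondMoments

variable {Ω : Type*} [MeasurableSpace Ω] {P : Measure Ω} [IsProbabilityMeasure P]

lemma integral_add_mul_mul_add_mul {X : Ω → ℝ} (hX : MemLp X 2 P) (hmean : ∫ ω, X ω ∂P = 0)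
    (hsq : ∫ ω, X ω ^ 2 ∂P = 1) (a b c d : ℝ) :
    ∫ ω, (a + X ω * b) * (c + X ω * d) ∂P = a * c + b * d := by
  have hexpand : (fun ω => (a + X ω * b) * (c + X ω * d))
      = fun ω => a * c + ((a * d + b * c) * X ω + b * d * X ω ^ 2) := by
    funext ω; ring
  have hlin := (hX.integrable one_le_two).const_mul (a * d + b * c)
  have hquad := hX.integrable_sq.const_mul (b * d)
  rw [hexpand, integral_add (integrable_const _) (hlin.fun_add hquad), integral_add hlin hquad,
    integral_const, integral_const_mul, integral_const_mul, hmean, hsq]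
  simp

lemma integral_transpose_mul_self_add_diagonal_mul {ι κ : Type*} [Fintype ι] [DecidableEq ι]
    (A B : Matrix ι κ ℝ) {ε : Ω → ι → ℝ} (hL2 : ∀ k, MemLp (fun ω => ε ω k) 2 P)
    (hmean : ∀ k, ∫ ω, ε ω k ∂P = 0) (hsq : ∀ k, ∫ ω, ε ω k ^ 2 ∂P = 1) (i j : κ) :
    ∫ ω, ((A + diagonal (ε ω) * B)ᵀ * (A + diagonal (ε ω) * B)) i j ∂P
      = (Aᵀ * A + Bᵀ * B) i j := by
  have hentry : ∀ ω, ((A + diagonal (ε ω) * B)ᵀ * (A + diagonal (ε ω) * B)) i j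
      = ∑ k, (A k i + ε ω k * B k i) * (A k j + ε ω k * B k j) := by
    intro ω
    rw [mul_apply]
    simp only [transpose_apply, Matrix.add_apply, diagonal_mul]
  have haffine : ∀ k a b, MemLp (fun ω => a + ε ω k * b) 2 P := fun k a b =>
    (memLp_const a).add ((hL2 k).mul_const b)
  have hint : ∀ k, Integrable (fun ω => (A k i + ε ω k * B k i) * (A k j + ε ω k * B k j)) P :=
    fun k => (haffine k _ _).integrable_mul (haffine k _ _)
  simp_rw [hentry]
  rw [integral_finsetSum _ fun k _ => hint k]
  simp only [integral_add_mul_mul_add_mul (hL2 _) (hmean _) (hsq _), Matrix.add_apply, mul_apply,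
    transpose_apply, Finset.sum_add_distrib]

end SecondMoments

theorem expected_metric_general
    {d D : ℕ}
    {Ω : Type*} [MeasurableSpace Ω] (P : Measure Ω) [IsProbabilityMeasure P]
    (ε : Ω → Fin D → ℝ) (hεm : Measurable ε)
    (hε : Measure.map ε P = Measure.pi fun _ : Fin D => gaussianReal 0 1)
    (Jμ Jσ : Matrix (Fin D) (Fin d) ℝ)
    (J : (Fin D → ℝ) → Matrix (Fin D) (Fin d) ℝ)
    (hJ : ∀ e i j, J e i j = Jμ i j + Jσ i j * e i) :
    ∀ i j, (∫ ω, ((J (ε ω))ᵀ * (J (ε ω))) i j ∂P)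
      = (Jμᵀ * Jμ + Jσᵀ * Jσ) i j := by
  have hlaw : ∀ k, HasLaw (fun ω => ε ω k) (gaussianReal 0 1) P := fun k =>
    (measurePreserving_eval _ k).comp_hasLaw ⟨hεm.aemeasurable, hε⟩
  have hJ_eq : ∀ e, J e = Jμ + diagonal e * Jσ := fun e => by
    ext i j
    simp [hJ, diagonal_mul, mul_comm]
  simp_rw [hJ_eq]
  exact integral_transpose_mul_self_add_diagonal_mul Jμ Jσ
    (fun k => (hlaw k).memLp_of_gaussianReal 2)
    (fun k => by simpa using (hlaw k).integral_eq)
    (fun k => by simpa using (hlaw k).integral_sq_of_gaussianReal)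

/-- For the stochastic generator `f(z) = μ(z) + σ(z) ⊙ ε` with
`ε ~ N(0, I_D)` and `μ, σ` differentiable, the expectation over `ε` of the random
metric `M_z = J_zᵀ J_z` (with `J_z = J^μ_z + B(ε)`, where column `i` of `B(ε)` is
`diag(∂σ/∂z_i) ε`) equals `(J^μ_z)ᵀ (J^μ_z) + (J^σ_z)ᵀ (J^σ_z)`. -/
theorem expected_metric
    {d D : ℕ} (μ σ : (Fin d → ℝ) → (Fin D → ℝ)) (z : Fin d → ℝ)
    (hμ : DifferentiableAt ℝ μ z) (hσ : DifferentiableAt ℝ σ z)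
    {Ω : Type*} [MeasurableSpace Ω] (P : Measure Ω) [IsProbabilityMeasure P]
    (ε : Ω → Fin D → ℝ) (hεm : Measurable ε)
    (hε : Measure.map ε P = Measure.pi fun _ : Fin D => gaussianReal 0 1)
    (Jμ Jσ : Matrix (Fin D) (Fin d) ℝ)
    (hJμ : ∀ i j, Jμ i j = fderiv ℝ μ z (Pi.single j 1) i)
    (hJσ : ∀ i j, Jσ i j = fderiv ℝ σ z (Pi.single j 1) i)
    (J : (Fin D → ℝ) → Matrix (Fin D) (Fin d) ℝ)
    (hJ : ∀ e i j, J e i j = Jμ i j + Jσ i j * e i) :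
    ∀ i j, (∫ ω, ((J (ε ω))ᵀ * (J (ε ω))) i j ∂P)
      = (Jμᵀ * Jμ + Jσᵀ * Jσ) i j :=
  expected_metric_general P ε hεm hε Jμ Jσ J hJ
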